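/- If σ is completely erasing and verifies the optimality condition, then for every finite binary word w with σ^h(w) = p (p finite) and every infinite binary word u, there exists an infinite binary word v such that σ^h(wv) = pu. -/

import Mathlib

/-- The alternating extension of a block substitution given by simple
substitutions `s i : Bool -> List Bool` applied to the digit in position `i` mod `k`. -/
def altApply (k : Nat) (s : Nat -> Bool -> List Bool) (w : List Bool) : List Bool :=
  (w.zipIdx.map fun p => s (p.2 % k) p.1).flatten

/-- The length-`m` prefix of an infinite binary word. -/
def prefixOf (u : Nat -> Bool) (m : Nat) : List Bool := List.ofFn fun i : Fin m => u i

/-- Concatenation of the first `m` words of a sequence of finite words. -/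
def concatPre (v : Nat -> List Bool) (m : Nat) : List Bool :=
  (List.ofFn fun i : Fin m => v i).flatten

/-- The optimality condition: every infinite binary word is an infinite
concatenation of nonempty images of length-`k` blocks under `sigma`. -/
def OC (k : Nat) (sigma : List Bool -> List Bool) : Prop :=
  ∀ w : Nat -> Bool, ∃ u : Nat -> List Bool,
    (∀ i, (u i).length = k ∧ sigma (u i) ≠ []) ∧
    ∀ m, concatPre (fun i => sigma (u i)) m
        = prefixOf w (concatPre (fun i => sigma (u i)) m).length

/-!
By induction on `h` it suffices to make one application of `σ` map the tail of `q`
onto a prescribed infinite word `f`. Pad `q` with the suffix of `w_ε` starting at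
phase `|q| mod k`: it is erased and brings the next letter back to phase `0`. After it
place the blocks `u₀ u₁ ⋯` that the optimality condition provides for `f`; aligned
blocks are mapped independently, so the images of the prefixes of this word are
`σ q` followed by longer and longer prefixes of `σ u₀ σ u₁ ⋯ = f`.
-/

theorem prefixOf_length (u : ℕ → Bool) (m : ℕ) : (prefixOf u m).length = m := by
  simp [prefixOf]

theorem prefixOf_add (u : ℕ → Bool) (a b : ℕ) :
    prefixOf u (a + b) = prefixOf u a ++ prefixOf (fun i => u (a + i)) b := by
  simp only [prefixOf, List.ofFn_add]
  rfl

theorem take_prefixOf (u : ℕ → Bool) {j L : ℕ} (h : j ≤ L) :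
    (prefixOf u L).take j = prefixOf u j := by
  rw [← Nat.add_sub_cancel' h, prefixOf_add]
  exact List.take_left' (prefixOf_length u j)

theorem eq_prefixOf_of_prefix {x : List Bool} {f : ℕ → Bool} {L : ℕ}
    (h : x <+: prefixOf f L) : x = prefixOf f x.length := by
  have hle : x.length ≤ L := prefixOf_length f L ▸ h.length_le
  rw [List.prefix_iff_eq_take.mp h, take_prefixOf f hle, prefixOf_length]

theorem prefixOf_getD (x : List Bool) {t : ℕ} (ht : t ≤ x.length) :
    prefixOf (fun i => x.getD i false) t = x.take t := by
  apply List.ext_getElem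
  · simp [prefixOf_length, ht]
  · intro i hi _
    simp only [prefixOf, List.getElem_ofFn, List.getElem_take]
    rw [List.getD_eq_getElem]

def prependWord (p : List Bool) (u : ℕ → Bool) : ℕ → Bool :=
  fun i => if i < p.length then p.getD i false else u (i - p.length)

theorem prefixOf_prependWord (p : List Bool) (u : ℕ → Bool) (L : ℕ) :
    prefixOf (prependWord p u) (p.length + L) = p ++ prefixOf u L := by
  rw [prefixOf_add]
  congr 1
  · apply List.ext_getElem <;> simp +contextual [prefixOf, prependWord]
  · simp [prependWord]

section Blocks

theorem concatPre_succ (v : ℕ → List Bool) (m : ℕ) :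
    concatPre v (m + 1) = concatPre v m ++ v m := by
  rw [concatPre, concatPre, List.ofFn_succ', List.concat_eq_append, List.flatten_append]
  simp

theorem le_length_concatPre {v : ℕ → List Bool} (hv : ∀ i, v i ≠ []) (m : ℕ) :
    m ≤ (concatPre v m).length := by
  induction m with
  | zero => simp
  | succ m ih =>
    have := List.length_pos_iff.mpr (hv m)
    rw [concatPre_succ, List.length_append]
    omega

def blockWord (k : ℕ) (u : ℕ → List Bool) : ℕ → Bool :=
  fun i => (u (i / k)).getD (i % k) false

variable {k : ℕ} {u : ℕ → List Bool}

theorem prefixOf_blockWord_add (hu : ∀ i, (u i).length = k) (m : ℕ) {t : ℕ} (ht : t ≤ k) :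
    prefixOf (blockWord k u) (m * k + t) = prefixOf (blockWord k u) (m * k) ++ (u m).take t := by
  rw [prefixOf_add, ← prefixOf_getD (u m) (hu m ▸ ht)]
  congr 1
  apply List.ext_getElem
  · simp [prefixOf_length]
  · intro i hi _
    have hik : i < k := by rw [prefixOf_length] at hi; omega
    have hdiv : (m * k + i) / k = m := by
      rw [Nat.add_comm, Nat.add_mul_div_right _ _ (by omega), Nat.div_eq_of_lt hik, Nat.zero_add]
    simp [prefixOf, blockWord, hdiv, Nat.mod_eq_of_lt hik]

theorem prefixOf_blockWord_mul (hu : ∀ i, (u i).length = k) (m : ℕ) :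
    prefixOf (blockWord k u) (m * k) = concatPre u m := by
  induction m with
  | zero => simp [prefixOf, concatPre]
  | succ m ih =>
    rw [Nat.succ_mul, prefixOf_blockWord_add hu m le_rfl, ih, concatPre_succ,
      List.take_of_length_le (hu m).le]

end Blocks

section Alternating

variable {k : ℕ} {s : ℕ → Bool → List Bool}

def altApplyFrom (k : ℕ) (s : ℕ → Bool → List Bool) (n : ℕ) (w : List Bool) : List Bool :=
  ((w.zipIdx n).map fun p => s (p.2 % k) p.1).flatten

theorem altApplyFrom_append (n : ℕ) (x y : List Bool) :
    altApplyFrom k s n (x ++ y) = altApplyFrom k s n x ++ altApplyFrom k s (n + x.length) y := by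
  simp [altApplyFrom, List.zipIdx_append]

theorem altApplyFrom_congr {n n' : ℕ} (h : n ≡ n' [MOD k]) (w : List Bool) :
    altApplyFrom k s n w = altApplyFrom k s n' w := by
  induction w generalizing n n' with
  | nil => rfl
  | cons b w ih =>
    simp only [altApplyFrom, List.zipIdx_cons, List.map_cons, List.flatten_cons] at ih ⊢
    rw [show n % k = n' % k from h, ih (h.add_right 1)]

theorem altApply_append (x y : List Bool) :
    altApply k s (x ++ y) = altApply k s x ++ altApplyFrom k s x.length y := by
  rw [← Nat.zero_add x.length]
  exact altApplyFrom_append 0 x y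

theorem altApply_append_of_dvd {x : List Bool} (hx : k ∣ x.length) (y : List Bool) :
    altApply k s (x ++ y) = altApply k s x ++ altApply k s y := by
  rw [altApply_append, altApplyFrom_congr (Nat.modEq_zero_iff_dvd.mpr hx)]
  rfl

theorem altApply_take_prefix (x : List Bool) (t : ℕ) :
    altApply k s (x.take t) <+: altApply k s x := by
  conv_rhs => rw [← List.take_append_drop t x, altApply_append]
  exact List.prefix_append _ _

theorem altApply_concatPre_append {u : ℕ → List Bool} (hu : ∀ i, (u i).length = k)
    (m : ℕ) (y : List Bool) :
    altApply k s (concatPre u m ++ y)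
      = concatPre (fun i => altApply k s (u i)) m ++ altApply k s y := by
  induction m generalizing y with
  | zero => simp [concatPre]
  | succ m ih =>
    rw [concatPre_succ, concatPre_succ, List.append_assoc, ih,
      altApply_append_of_dvd (hu m ▸ dvd_refl k), List.append_assoc]

variable {weps : List Bool}

theorem altApplyFrom_drop_eq_nil (hk : 0 < k) (hlen : weps.length = k)
    (heps : altApply k s weps = []) (n : ℕ) :
    altApplyFrom k s n (weps.drop (n % k)) = [] := by
  have htake : (weps.take (n % k)).length = n % k := by
    rw [List.length_take, hlen]; exact min_eq_left (Nat.mod_lt n hk).le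
  rw [← List.take_append_drop (n % k) weps, altApply_append, htake] at heps
  rw [altApplyFrom_congr (Nat.mod_modEq n k).symm]
  exact (List.append_eq_nil_iff.mp heps).2

theorem altApply_append_drop_append (hk : 0 < k) (hlen : weps.length = k)
    (heps : altApply k s weps = []) (q x : List Bool) :
    altApply k s (q ++ (weps.drop (q.length % k) ++ x)) = altApply k s q ++ altApply k s x := by
  have hmod : q.length + (weps.drop (q.length % k)).length ≡ 0 [MOD k] := by
    have := Nat.mod_lt q.length hk
    have := Nat.mod_add_div q.length k
    rw [List.length_drop, hlen, Nat.modEq_zero_iff_dvd]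
    exact ⟨q.length / k + 1, by rw [Nat.mul_succ]; omega⟩
  rw [altApply_append, altApplyFrom_append, altApplyFrom_drop_eq_nil hk hlen heps,
    List.nil_append, altApplyFrom_congr hmod]
  rfl

end Alternating

/-- `F (w v) = F w · f` for infinite words `v`, `f`: the images of all long enough prefixes
of `w v` are `F w` followed by arbitrarily long prefixes of `f`. -/
def MapsTail (F : List Bool → List Bool) (w : List Bool) (v f : ℕ → Bool) : Prop :=
  ∀ n, ∃ N, ∀ l ≥ N, ∃ L, n ≤ L ∧ F (w ++ prefixOf v l) = F w ++ prefixOf f L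

theorem MapsTail.id (w : List Bool) (v : ℕ → Bool) : MapsTail id w v v :=
  fun n => ⟨n, fun l hl => ⟨l, hl, rfl⟩⟩

theorem MapsTail.comp {F G : List Bool → List Bool} {w : List Bool} {v g f : ℕ → Bool}
    (hG : MapsTail G (F w) g f) (hF : MapsTail F w v g) : MapsTail (G ∘ F) w v f := by
  intro n
  obtain ⟨N', hN'⟩ := hG n
  obtain ⟨N, hN⟩ := hF N'
  refine ⟨N, fun l hl => ?_⟩
  obtain ⟨L', hL', hFl⟩ := hN l hl
  obtain ⟨L, hL, hGL⟩ := hN' L' hL'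
  exact ⟨L, hL, by simp only [Function.comp_apply, hFl, hGL]⟩

section Optimality

variable {k : ℕ} {s : ℕ → Bool → List Bool} {weps : List Bool}

theorem exists_mapsTail_altApply (hlen : weps.length = k) (heps : altApply k s weps = [])
    (hOC : OC k (altApply k s)) (q : List Bool) (f : ℕ → Bool) :
    ∃ g, MapsTail (altApply k s) q g f := by
  obtain ⟨u, hu, hcat⟩ := hOC f
  have hblk : ∀ i, (u i).length = k := fun i => (hu i).1
  have hne : ∀ i, altApply k s (u i) ≠ [] := fun i => (hu i).2
  have hk : 0 < k := Nat.pos_of_ne_zero fun hk0 =>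
    hne 0 (by rw [List.eq_nil_of_length_eq_zero ((hblk 0).trans hk0)]; rfl)
  set z := weps.drop (q.length % k)
  refine ⟨prependWord z (blockWord k u), fun n => ⟨z.length + n * k, fun l hl => ?_⟩⟩
  set m := (l - z.length) / k
  set t := (l - z.length) % k
  have hl : l = z.length + (m * k + t) := by
    rw [Nat.div_add_mod']; omega
  have hnm : n ≤ m := (Nat.le_div_iff_mul_le hk).mpr (by omega)
  set X := concatPre (fun i => altApply k s (u i)) m ++ altApply k s ((u m).take t)
  have hX : X <+: prefixOf f (concatPre (fun i => altApply k s (u i)) (m + 1)).length := by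
    rw [← hcat, concatPre_succ]
    exact List.prefix_append_right_inj _ |>.mpr (altApply_take_prefix (u m) t)
  refine ⟨X.length, ?_, ?_⟩
  · have := le_length_concatPre hne m
    simp only [X, List.length_append]
    omega
  · rw [hl, prefixOf_prependWord, prefixOf_blockWord_add hblk m (Nat.mod_lt _ hk).le,
      prefixOf_blockWord_mul hblk, altApply_append_drop_append hk hlen heps,
      altApply_concatPre_append hblk, ← eq_prefixOf_of_prefix hX]

end Optimality

theorem MapsTail.exists_iterate {F : List Bool → List Bool}
    (hF : ∀ q f, ∃ g, MapsTail F q g f) (h : ℕ) (w : List Bool) (f : ℕ → Bool) :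
    ∃ v, MapsTail F^[h] w v f := by
  induction h generalizing f with
  | zero => exact ⟨f, MapsTail.id w f⟩
  | succ h ih =>
    obtain ⟨g, hg⟩ := hF (F^[h] w) f
    obtain ⟨v, hv⟩ := ih g
    exact ⟨v, Function.iterate_succ' F h ▸ hg.comp hv⟩

theorem completely_erasing_extend_to_target_general
    (k : Nat) (s : Nat -> Bool -> List Bool) (weps : List Bool)
    (hlen : weps.length = k)
    (herase : ∀ w : List Bool, w.length = k → (altApply k s w = [] ↔ w = weps))
    (hOC : OC k (altApply k s)) :
    ∀ (w p : List Bool) (h : Nat), (altApply k s)^[h] w = p →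
      ∀ u : Nat -> Bool, ∃ v : Nat -> Bool, ∀ m : Nat, ∃ l : Nat,
        m ≤ ((altApply k s)^[h] (w ++ prefixOf v l)).length ∧
        (altApply k s)^[h] (w ++ prefixOf v l)
          = prefixOf
              (fun i => if i < p.length then p.getD i false else u (i - p.length))
              ((altApply k s)^[h] (w ++ prefixOf v l)).length := by
  intro w p h hp u
  obtain ⟨v, hv⟩ := MapsTail.exists_iterate
    (exists_mapsTail_altApply hlen ((herase weps hlen).mpr rfl) hOC) h w u
  refine ⟨v, fun m => ?_⟩
  obtain ⟨N, hN⟩ := hv m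
  obtain ⟨L, hmL, himage⟩ := hN N le_rfl
  rw [hp] at himage
  refine ⟨N, ?_, ?_⟩ <;> rw [himage, List.length_append, prefixOf_length]
  · omega
  · exact (prefixOf_prependWord p u L).symm

/-- if the alternating substitution (given by `s`) is completely
erasing and satisfies the optimality condition, then whenever
`sigma^h(w) = p` (finite), for every infinite word `u` there is an infinite
word `v` with `sigma^h(wv) = pu` (in the sense that the iterated images of the
finite prefixes of `wv` are exactly the prefixes of `pu`, of unbounded
length). -/
theorem completely_erasing_extend_to_target
    (k : Nat) (s : Nat -> Bool -> List Bool) (weps : List Bool)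
    (hk : 2 ≤ k) (hlen : weps.length = k)
    (hne1 : weps ≠ List.replicate k true)
    (herase : ∀ w : List Bool, w.length = k → (altApply k s w = [] ↔ w = weps))
    (hCE : ∀ w : List Bool, ∃ n : Nat, (altApply k s)^[n] w = [])
    (hOC : OC k (altApply k s)) :
    ∀ (w p : List Bool) (h : Nat), (altApply k s)^[h] w = p →
      ∀ u : Nat -> Bool, ∃ v : Nat -> Bool, ∀ m : Nat, ∃ l : Nat,
        m ≤ ((altApply k s)^[h] (w ++ prefixOf v l)).length ∧
        (altApply k s)^[h] (w ++ prefixOf v l)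
          = prefixOf
              (fun i => if i < p.length then p.getD i false else u (i - p.length))
              ((altApply k s)^[h] (w ++ prefixOf v l)).length :=
  completely_erasing_extend_to_target_general k s weps hlen herase hOC
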